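/- Uniqueness from k=1 clustering: suppose (ψ_n)_{n≥1} is a sequence of polynomials with ψ_n in n variables, ψ_1 = 1, each ψ_n symmetric, and satisfying ψ_n(z_1,...,z_{n−1},z) = (∏_{l=1}^{n−1}(z_l − z)^r) ψ_{n−1}(z_1,...,z_{n−1}) for all n ≥ 2, and assume each ψ_n is homogeneous of degree r·n(n−1)/2. Then ψ_N(z) = ∏_{1≤j<k≤N}(z_j−z_k)^r for all N (when r is even). -/
import Mathlib


open MvPolynomial

lemma Ioi_castSucc_eq {n : ℕ} (j : Fin n) :
    Finset.Ioi (j.castSucc) =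
      insert (Fin.last n) ((Finset.Ioi j).map Fin.castSuccEmb) := by
  ext k
  refine Fin.lastCases ?_ ?_ k
  · simp [Fin.castSucc_lt_last]
  · intro i
    simp only [Finset.mem_Ioi, Finset.mem_insert, Finset.mem_map, Fin.castSuccEmb_apply]
    constructor
    · intro h
      right
      exact ⟨i, by simpa using h, rfl⟩
    · rintro (h | ⟨a, ha, h⟩)
      · exact absurd h (Fin.castSucc_lt_last i).ne
      · have : a = i := Fin.castSucc_injective n h
        subst this
        simpa using ha

lemma prod_step {K : Type*} [CommRing K] (n : ℕ) (f : Fin (n + 1) → K) :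
    (∏ j : Fin (n + 1), ∏ k ∈ Finset.Ioi j, (f j - f k)) =
      (∏ l : Fin n, (f l.castSucc - f (Fin.last n))) *
        ∏ j : Fin n, ∏ k ∈ Finset.Ioi j, (f j.castSucc - f k.castSucc) := by
  have hlast : Finset.Ioi (Fin.last n) = ∅ := by
    ext k
    simp [Fin.le_last k, not_lt]
  rw [Fin.prod_univ_castSucc, hlast, Finset.prod_empty, mul_one, ← Finset.prod_mul_distrib]
  refine Finset.prod_congr rfl fun j _ => ?_
  have hnm : Fin.last n ∉ (Finset.Ioi j).map Fin.castSuccEmb := by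
    simp only [Finset.mem_map, Fin.castSuccEmb_apply, not_exists]
    rintro a ⟨_, h⟩
    exact (Fin.castSucc_lt_last a).ne h
  rw [Ioi_castSucc_eq, Finset.prod_insert hnm, Finset.prod_map]
  rfl

/-- Uniqueness from `k = 1` clustering: if `(ψ_n)` is a sequence of polynomials,
`ψ_n` in `n` variables, with `ψ_1 = 1`, each `ψ_n` symmetric and homogeneous of
degree `r·n(n-1)/2`, and satisfying the clustering property
`ψ_{n+1}(z_1,…,z_n,w) = (∏_{l=1}^n (z_l - w)^r) ψ_n(z_1,…,z_n)` for `n ≥ 1`,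
then `ψ_N = ∏_{1≤j<k≤N}(z_j - z_k)^r` for all `N ≥ 1` (for `r` even and positive). -/
theorem clustering_uniqueness {K : Type*} [Field K] [CharZero K]
    (r : ℕ) (hr : Even r) (hr0 : 0 < r)
    (ψ : (n : ℕ) → MvPolynomial (Fin n) K)
    (h1 : ψ 1 = 1)
    (hsym : ∀ (n : ℕ) (σ : Equiv.Perm (Fin n)), rename σ (ψ n) = ψ n)
    (hhom : ∀ n : ℕ, (ψ n).IsHomogeneous (r * (n * (n - 1) / 2)))
    (hclus : ∀ n : ℕ, 1 ≤ n → ∀ (z : Fin n → K) (w : K),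
      eval (Fin.snoc z w : Fin (n + 1) → K) (ψ (n + 1))
        = (∏ l : Fin n, (z l - w) ^ r) * eval z (ψ n))
    (N : ℕ) (hN : 1 ≤ N) :
    ψ N = (∏ j : Fin N, ∏ k ∈ Finset.Ioi j, (X j - X k)) ^ r := by
  induction N, hN using Nat.le_induction with
  | base =>
    rw [h1]
    have : Finset.Ioi (0 : Fin 1) = ∅ := by decide
    simp [Fin.prod_univ_one, this]
  | succ n hn ih =>
    apply MvPolynomial.funext
    intro x
    have hx : x = Fin.snoc (Fin.init x) (x (Fin.last n)) := (Fin.snoc_init_self x).symm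
    rw [hx, hclus n hn, ih]
    simp only [map_pow, map_prod, eval_sub, eval_X]
    rw [prod_step n (Fin.snoc (Fin.init x) (x (Fin.last n)))]
    simp only [Fin.snoc_castSucc, Fin.snoc_last, Fin.init]
    rw [Finset.prod_pow, ← mul_pow]
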